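/- arXiv:2501.17674 — 2 statements merged into one kernel-verified Lean document; each statement's English description precedes it below -/
import Mathlib

section
/- Let I = [0, T], let ϑ be a finite compactly supported nonnegative Borel measure on ℝⁿ, and let f : I × ℝⁿ → ℝⁿ and g : I × ℝⁿ → ℝ be bounded functions, measurable in t and continuous in x. Let X : I × ℝⁿ → ℝⁿ be continuous such that for each x ∈ ℝⁿ the curve t ↦ X_t(x) is absolutely continuous, X_0(x) = x, and (d/dt) X_t(x) = f_t(X_t(x)) for almost every t ∈ I. Define Y_t(x) := exp(∫₀ᵗ g_τ(X_τ(x)) dτ). Define measures μ_t on ℝⁿ by ⟨μ_t, φ⟩ := ∫ Y_t(x) φ(X_t(x)) dϑ(x). Then for every continuously differentiable φ : ℝⁿ → ℝ with bounded gradient, the map t ↦ ⟨μ_t, φ⟩ is absolutely continuous on I and for almost every t ∈ I, (d/dt)⟨μ_t, φ⟩ = ∫ Y_t(x) [∇φ(X_t(x)) · f_t(X_t(x)) + g_t(X_t(x)) φ(X_t(x))] dϑ(x). -/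
/-!
Fix an initial point `x`. Along the characteristic, `X_τ(x) = x + ∫₀^τ f_s(X_s(x)) ds` and
`log Y_τ(x) = ∫₀^τ g_s(X_s(x)) ds` are primitives of bounded measurable functions, hence Lipschitz
in `τ` and, by the Lebesgue differentiation theorem, differentiable at almost every `τ` with the
integrands as derivatives. So `τ ↦ Y_τ(x) φ(X_τ(x))` is locally Lipschitz, hence absolutely
continuous, and the chain rule identifies its a.e. derivative as
`Y_τ(x) (∇φ(X_τ(x)) · f_τ(X_τ(x)) + g_τ(X_τ(x)) φ(X_τ(x)))`; the fundamental theorem of calculus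
for absolutely continuous functions gives the identity for each `x`. Integrating in `x` against
`ϑ` and exchanging the two integrals is legitimate since, by compactness of `[0, t] × supp ϑ`
and continuity of `X`, all the integrands are bounded there.
-/

open MeasureTheory Set Filter intervalIntegral

theorem LocallyLipschitz.absolutelyContinuousOnInterval {X : Type*} [PseudoMetricSpace X]
    {f : ℝ → X} (hf : LocallyLipschitz f) (a b : ℝ) : AbsolutelyContinuousOnInterval f a b :=
  have ⟨_, hK⟩ := hf.locallyLipschitzOn.exists_lipschitzOnWith_of_compact isCompact_uIcc
  hK.absolutelyContinuousOnInterval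

theorem AbsolutelyContinuousOnInterval.integral_eq_sub_of_ae_hasDerivAt {f f' : ℝ → ℝ}
    {a b : ℝ} (hf : AbsolutelyContinuousOnInterval f a b)
    (hf' : ∀ᵐ x, x ∈ uIcc a b → HasDerivAt f (f' x) x) :
    ∫ x in a..b, f' x = f b - f a := by
  rw [← hf.integral_deriv_eq_sub]
  refine integral_congr_ae ?_
  filter_upwards [hf'] with x hx hxab using (hx (uIoc_subset_uIcc hxab)).deriv.symm

theorem integral_exp_mul_comp_eq_sub {E : Type*} [NormedAddCommGroup E] [NormedSpace ℝ E]
    {φ : E → ℝ} (hφ : ContDiff ℝ 1 φ) {u u' : ℝ → ℝ} {v v' : ℝ → E}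
    (hu : LocallyLipschitz u) (hv : LocallyLipschitz v)
    (hu' : ∀ᵐ τ, HasDerivAt u (u' τ) τ) (hv' : ∀ᵐ τ, HasDerivAt v (v' τ) τ) (a b : ℝ) :
    ∫ τ in a..b, Real.exp (u τ) * (fderiv ℝ φ (v τ) (v' τ) + u' τ * φ (v τ)) =
      Real.exp (u b) * φ (v b) - Real.exp (u a) * φ (v a) := by
  have hψ : ContDiff ℝ 1 fun p : ℝ × E => Real.exp p.1 * φ p.2 :=
    (Real.contDiff_exp.comp contDiff_fst).mul (hφ.comp contDiff_snd)
  have hAC : AbsolutelyContinuousOnInterval (fun τ => Real.exp (u τ) * φ (v τ)) a b :=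
    (hψ.locallyLipschitz.comp (hu.prodMk hv)).absolutelyContinuousOnInterval a b
  refine hAC.integral_eq_sub_of_ae_hasDerivAt ?_
  filter_upwards [hu', hv'] with τ huτ hvτ _
  refine (huτ.exp.mul
    ((hφ.differentiable one_ne_zero _).hasFDerivAt.comp_hasDerivAt τ hvτ)).congr_deriv ?_
  simp only [Function.comp_apply]
  ring

section Primitive

variable {E : Type*} [NormedAddCommGroup E] {c : ℝ → E} {C : ℝ}

theorem intervalIntegrable_of_norm_le (hc : AEStronglyMeasurable c volume)
    (hC : ∀ s, ‖c s‖ ≤ C) (a b : ℝ) : IntervalIntegrable c volume a b :=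
  (intervalIntegrable_const (c := C)).mono_fun hc.restrict
    (ae_of_all _ fun s => (hC s).trans (le_abs_self C))

variable [NormedSpace ℝ E]

theorem lipschitzWith_intervalIntegral (hc : AEStronglyMeasurable c volume)
    (hC : ∀ s, ‖c s‖ ≤ C) (a : ℝ) : LipschitzWith C.toNNReal fun τ => ∫ s in a..τ, c s :=
  LipschitzWith.of_dist_le' fun τ σ => by
    rw [dist_eq_norm, integral_interval_sub_left (intervalIntegrable_of_norm_le hc hC a τ)
      (intervalIntegrable_of_norm_le hc hC a σ), Real.dist_eq]
    exact norm_integral_le_of_norm_le_const fun s _ => hC s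

theorem ae_hasDerivAt_intervalIntegral [CompleteSpace E] (hc : AEStronglyMeasurable c volume)
    (hC : ∀ s, ‖c s‖ ≤ C) (a : ℝ) : ∀ᵐ τ, HasDerivAt (fun τ => ∫ s in a..τ, c s) (c τ) τ := by
  have : LocallyIntegrable c volume :=
    (locallyIntegrable_const C).mono hc (ae_of_all _ fun s => (hC s).trans (le_abs_self C))
  filter_upwards [_root_.LocallyIntegrable.ae_hasDerivAt_integral this] with τ hτ using hτ a

end Primitive

theorem exp_intervalIntegral_le {d : ℝ → ℝ} {C : ℝ} (hC : ∀ s, |d s| ≤ C) (τ : ℝ) :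
    Real.exp (∫ s in 0..τ, d s) ≤ Real.exp (C * |τ|) := by
  refine Real.exp_le_exp.2 ((le_abs_self _).trans ?_)
  simpa using norm_integral_le_of_norm_le_const (a := 0) (b := τ) fun s _ =>
    (Real.norm_eq_abs _).trans_le (hC s)

theorem exp_integral_mul_comp_sub_eq_integral {E : Type*} [NormedAddCommGroup E]
    [NormedSpace ℝ E] [CompleteSpace E] {φ : E → ℝ} (hφ : ContDiff ℝ 1 φ) {c : ℝ → E}
    {d : ℝ → ℝ} {Cc Cd : ℝ} (hc : AEStronglyMeasurable c volume)
    (hd : AEStronglyMeasurable d volume) (hcC : ∀ s, ‖c s‖ ≤ Cc) (hdC : ∀ s, |d s| ≤ Cd)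
    {γ : ℝ → E} {x : E} {t : ℝ} (hγ : ∀ τ ∈ uIcc 0 t, γ τ = x + ∫ s in 0..τ, c s) :
    Real.exp (∫ s in 0..t, d s) * φ (γ t) - φ x =
      ∫ τ in 0..t, Real.exp (∫ s in 0..τ, d s) * (fderiv ℝ φ (γ τ) (c τ) + d τ * φ (γ τ)) := by
  have hFTC := integral_exp_mul_comp_eq_sub hφ
    (lipschitzWith_intervalIntegral hd hdC 0).locallyLipschitz
    ((LocallyLipschitz.const x).add (lipschitzWith_intervalIntegral hc hcC 0).locallyLipschitz)
    (ae_hasDerivAt_intervalIntegral hd hdC 0)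
    ((ae_hasDerivAt_intervalIntegral hc hcC 0).mono fun τ hτ => hτ.const_add x) 0 t
  rw [hγ t right_mem_uIcc]
  calc _ = _ := by simpa using hFTC.symm
    _ = _ := integral_congr fun τ hτ => by simp only [hγ τ hτ]

theorem measurable_caratheodory_comp {α β E F : Type*} [MeasurableSpace α] [MeasurableSpace β]
    [TopologicalSpace E] [TopologicalSpace.MetrizableSpace E] [SecondCountableTopology E]
    [MeasurableSpace E] [OpensMeasurableSpace E] [TopologicalSpace F]
    [TopologicalSpace.PseudoMetrizableSpace F] [MeasurableSpace F] [BorelSpace F]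
    {f : β → E → F} (hf_cont : ∀ t, Continuous (f t)) (hf_meas : ∀ x, Measurable fun t => f t x)
    {τ : α → β} {Z : α → E} (hτ : Measurable τ) (hZ : Measurable Z) :
    Measurable fun a => f (τ a) (Z a) :=
  (measurable_uncurry_of_continuous_of_measurable (u := fun x t => f t x) hf_cont hf_meas).comp
    (hZ.prodMk hτ)

theorem measurable_intervalIntegral_primitive {α E : Type*} [MeasurableSpace α]
    [NormedAddCommGroup E] [NormedSpace ℝ E] [MeasurableSpace E] [BorelSpace E]
    {G : ℝ → α → E} (hG : StronglyMeasurable (Function.uncurry G))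
    (hG_int : ∀ x a b, IntervalIntegrable (fun s => G s x) volume a b) (a : ℝ) :
    Measurable fun p : ℝ × α => ∫ s in a..p.1, G s p.2 := by
  refine measurable_uncurry_of_continuous_of_measurable
    (u := fun τ x => ∫ s in a..τ, G s x) (fun x => continuous_primitive (hG_int x) a) fun τ => ?_
  exact (hG.integral_prod_left.sub hG.integral_prod_left).measurable

theorem intervalIntegral_integral_swap_of_ae_norm_le {α E : Type*} [MeasurableSpace α]
    [NormedAddCommGroup E] [NormedSpace ℝ E] {μ : Measure α} [IsFiniteMeasure μ]
    {W : ℝ → α → E} {a b C : ℝ}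
    (hW : AEStronglyMeasurable (Function.uncurry W) ((volume.restrict (uIoc a b)).prod μ))
    (hC : ∀ᵐ x ∂μ, ∀ s ∈ uIoc a b, ‖W s x‖ ≤ C) :
    ∫ s in a..b, ∫ x, W s x ∂μ = ∫ x, (∫ s in a..b, W s x) ∂μ := by
  have : IsFiniteMeasure (volume.restrict (uIoc a b)) := Real.isFiniteMeasure_restrict_Ioc _ _
  refine intervalIntegral_integral_swap (.of_bound hW C ?_)
  filter_upwards [Measure.quasiMeasurePreserving_fst.ae (ae_restrict_mem measurableSet_uIoc),
    Measure.quasiMeasurePreserving_snd.ae hC] with p hs hx using hx p.1 hs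

section Characteristics

variable {E : Type*}

noncomputable def characteristicWeight (g : ℝ → E → ℝ) (X : ℝ → E → E) (t : ℝ) (x : E) : ℝ :=
  Real.exp (∫ s in 0..t, g s (X s x))

theorem norm_characteristicWeight_le {g : ℝ → E → ℝ} {C : ℝ} (hC : ∀ s y, |g s y| ≤ C)
    (X : ℝ → E → E) {s t : ℝ} (hs : s ∈ uIcc 0 t) (x : E) :
    ‖characteristicWeight g X s x‖ ≤ Real.exp (C * |t|) := by
  have hC0 : 0 ≤ C := (abs_nonneg _).trans (hC s x)
  rw [characteristicWeight, Real.norm_of_nonneg (Real.exp_pos _).le]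
  refine (exp_intervalIntegral_le (fun r => hC r _) s).trans ?_
  exact Real.exp_le_exp.2
    (mul_le_mul_of_nonneg_left (by simpa using abs_sub_left_of_mem_uIcc hs) hC0)

variable [NormedAddCommGroup E]

theorem norm_characteristicWeight_mul_le [NormedSpace ℝ E] {f : ℝ → E → E} {g : ℝ → E → ℝ}
    {X : ℝ → E → E} {φ : E → ℝ} {Cf Cg Bφ BD : ℝ} (hf_bdd : ∀ t x, ‖f t x‖ ≤ Cf)
    (hg_bdd : ∀ t x, |g t x| ≤ Cg) {s t : ℝ} (hs : s ∈ uIcc 0 t) {x : E}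
    (hBD : ‖fderiv ℝ φ (X s x)‖ ≤ BD) (hBφ : ‖φ (X s x)‖ ≤ Bφ) :
    ‖characteristicWeight g X s x * (fderiv ℝ φ (X s x) (f s (X s x)) + g s (X s x) * φ (X s x))‖
      ≤ Real.exp (Cg * |t|) * (BD * Cf + Cg * Bφ) := by
  have hCf : 0 ≤ Cf := (norm_nonneg _).trans (hf_bdd s x)
  have hCg : 0 ≤ Cg := (abs_nonneg _).trans (hg_bdd s x)
  rw [norm_mul]
  gcongr
  · exact norm_characteristicWeight_le hg_bdd X hs x
  · refine (norm_add_le _ _).trans (add_le_add ?_ ?_)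
    · exact ContinuousLinearMap.le_of_opNorm_le_of_le _ hBD (hf_bdd _ _)
    · rw [norm_mul]
      exact mul_le_mul (hg_bdd _ _) hBφ (norm_nonneg _) hCg

variable [MeasurableSpace E] [BorelSpace E] [SecondCountableTopology E]
  {f : ℝ → E → E} {g : ℝ → E → ℝ} {X : ℝ → E → E} {Cf Cg : ℝ}

theorem measurable_uncurry_characteristicWeight (hg_cont : ∀ t, Continuous (g t))
    (hg_meas : ∀ x, Measurable fun t => g t x) (hg_bdd : ∀ t x, |g t x| ≤ Cg)
    (hX : Measurable (Function.uncurry X)) :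
    Measurable (Function.uncurry (characteristicWeight g X)) := by
  have hgX : Measurable fun p : ℝ × E => g p.1 (X p.1 p.2) :=
    measurable_caratheodory_comp hg_cont hg_meas measurable_fst hX
  have hgX_int (x : E) (a b : ℝ) : IntervalIntegrable (fun s => g s (X s x)) volume a b :=
    intervalIntegrable_of_norm_le
      (hgX.comp (measurable_id.prodMk measurable_const)).aestronglyMeasurable
      (fun s => hg_bdd s _) a b
  exact Real.measurable_exp.comp
    (measurable_intervalIntegral_primitive hgX.stronglyMeasurable hgX_int 0)

variable [NormedSpace ℝ E] {φ : E → ℝ}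

theorem measurable_uncurry_characteristicWeight_mul (hφ : ContDiff ℝ 1 φ)
    (hf_cont : ∀ t, Continuous (f t)) (hf_meas : ∀ x, Measurable fun t => f t x)
    (hg_cont : ∀ t, Continuous (g t)) (hg_meas : ∀ x, Measurable fun t => g t x)
    (hg_bdd : ∀ t x, |g t x| ≤ Cg) (hX : Continuous (Function.uncurry X)) :
    Measurable fun p : ℝ × E => characteristicWeight g X p.1 p.2 *
      (fderiv ℝ φ (X p.1 p.2) (f p.1 (X p.1 p.2)) + g p.1 (X p.1 p.2) * φ (X p.1 p.2)) := by
  have hDφX : Measurable fun p : ℝ × E => fderiv ℝ φ (X p.1 p.2) :=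
    ((hφ.continuous_fderiv one_ne_zero).comp hX).measurable
  exact (measurable_uncurry_characteristicWeight hg_cont hg_meas hg_bdd hX.measurable).mul
    ((isBoundedBilinearMap_apply.continuous.measurable2 hDφX
      (measurable_caratheodory_comp hf_cont hf_meas measurable_fst hX.measurable)).add
      ((measurable_caratheodory_comp hg_cont hg_meas measurable_fst hX.measurable).mul
        (hφ.continuous.comp hX).measurable))

theorem characteristicWeight_mul_comp_sub_eq_integral [CompleteSpace E] (hφ : ContDiff ℝ 1 φ)
    (hf_cont : ∀ t, Continuous (f t)) (hf_meas : ∀ x, Measurable fun t => f t x)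
    (hg_cont : ∀ t, Continuous (g t)) (hg_meas : ∀ x, Measurable fun t => g t x)
    (hf_bdd : ∀ t x, ‖f t x‖ ≤ Cf) (hg_bdd : ∀ t x, |g t x| ≤ Cg)
    (hX : Measurable (Function.uncurry X)) {x : E} {t : ℝ} (hX0 : X 0 x = x)
    (hX_ode : ∀ τ ∈ uIcc 0 t, X τ x = x + ∫ s in 0..τ, f s (X s x)) :
    characteristicWeight g X t x * φ (X t x) - characteristicWeight g X 0 x * φ (X 0 x) =
      ∫ τ in 0..t, characteristicWeight g X τ x *
        (fderiv ℝ φ (X τ x) (f τ (X τ x)) + g τ (X τ x) * φ (X τ x)) := by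
  have hXx : Measurable fun s => X s x := hX.comp (measurable_id.prodMk measurable_const)
  simpa [characteristicWeight, hX0] using exp_integral_mul_comp_sub_eq_integral hφ
    (measurable_caratheodory_comp hf_cont hf_meas measurable_id hXx).aestronglyMeasurable
    (measurable_caratheodory_comp hg_cont hg_meas measurable_id hXx).aestronglyMeasurable
    (fun s => hf_bdd s _) (fun s => hg_bdd s _) hX_ode

end Characteristics

theorem stmt2_general (n : ℕ) (T : ℝ)
    (ϑ : Measure (EuclideanSpace ℝ (Fin n))) [IsFiniteMeasure ϑ]
    (hϑ_supp : ∃ K, IsCompact K ∧ ϑ Kᶜ = 0)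
    (f : ℝ → EuclideanSpace ℝ (Fin n) → EuclideanSpace ℝ (Fin n))
    (g : ℝ → EuclideanSpace ℝ (Fin n) → ℝ)
    (hf_meas : ∀ x, Measurable fun t => f t x) (hg_meas : ∀ x, Measurable fun t => g t x)
    (hf_cont : ∀ t, Continuous (f t)) (hg_cont : ∀ t, Continuous (g t))
    (hf_bdd : ∃ C, ∀ t x, ‖f t x‖ ≤ C) (hg_bdd : ∃ C, ∀ t x, |g t x| ≤ C)
    (X : ℝ → EuclideanSpace ℝ (Fin n) → EuclideanSpace ℝ (Fin n))
    (hX_cont : Continuous (Function.uncurry X))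
    (hX0 : ∀ x, X 0 x = x)
    (hX_ode : ∀ x, ∀ t ∈ Icc 0 T, X t x = x + ∫ s in (0:ℝ)..t, f s (X s x))
    (Y : ℝ → EuclideanSpace ℝ (Fin n) → ℝ)
    (hY : ∀ t x, Y t x = Real.exp (∫ s in (0:ℝ)..t, g s (X s x))) :
    ∀ φ : EuclideanSpace ℝ (Fin n) → ℝ, ContDiff ℝ 1 φ →
      (∃ C, ∀ x, ‖fderiv ℝ φ x‖ ≤ C) →
      ∀ t ∈ Icc 0 T,
        (∫ x, Y t x * φ (X t x) ∂ϑ) - (∫ x, Y 0 x * φ (X 0 x) ∂ϑ) =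
          ∫ s in (0:ℝ)..t, ∫ x,
            Y s x * (fderiv ℝ φ (X s x) (f s (X s x)) + g s (X s x) * φ (X s x)) ∂ϑ := by
  intro φ hφ _ t ⟨ht0, htT⟩
  obtain ⟨K, hK, hϑK⟩ := hϑ_supp
  obtain ⟨Cf, hCf⟩ := hf_bdd
  obtain ⟨Cg, hCg⟩ := hg_bdd
  obtain rfl : Y = characteristicWeight g X := funext₂ hY
  have hKae : ∀ᵐ x ∂ϑ, x ∈ K := ae_iff.2 hϑK
  have hφX : Continuous fun p : ℝ × _ => φ (X p.1 p.2) := hφ.continuous.comp hX_cont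
  obtain ⟨Bφ, hBφ⟩ := (isCompact_uIcc.prod hK).exists_bound_of_continuousOn hφX.continuousOn
  obtain ⟨BD, hBD⟩ := (isCompact_uIcc.prod hK).exists_bound_of_continuousOn
    ((hφ.continuous_fderiv one_ne_zero).comp hX_cont).continuousOn
  have hslice (s) (hs : s ∈ uIcc 0 t) :
      Integrable (fun x => characteristicWeight g X s x * φ (X s x)) ϑ :=
    .of_bound (((measurable_uncurry_characteristicWeight hg_cont hg_meas hCg
      hX_cont.measurable).comp measurable_prodMk_left).mul
      (hφX.comp (.prodMk_right s)).measurable).aestronglyMeasurable _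
      (hKae.mono fun x hx => (norm_mul_le _ _).trans (mul_le_mul
        (norm_characteristicWeight_le hCg X hs x) (hBφ (s, x) ⟨hs, hx⟩) (norm_nonneg _)
        (Real.exp_pos _).le))
  rw [← integral_sub (hslice t right_mem_uIcc) (hslice 0 left_mem_uIcc),
    intervalIntegral_integral_swap_of_ae_norm_le (measurable_uncurry_characteristicWeight_mul
      hφ hf_cont hf_meas hg_cont hg_meas hCg hX_cont).aestronglyMeasurable
      (hKae.mono fun x hx s hs => norm_characteristicWeight_mul_le hCf hCg
        (uIoc_subset_uIcc hs) (hBD (s, x) ⟨uIoc_subset_uIcc hs, hx⟩)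
        (hBφ (s, x) ⟨uIoc_subset_uIcc hs, hx⟩))]
  exact integral_congr_ae (ae_of_all _ fun x => characteristicWeight_mul_comp_sub_eq_integral
    hφ hf_cont hf_meas hg_cont hg_meas hCf hCg hX_cont.measurable (hX0 x)
    fun τ hτ => hX_ode x τ (uIcc_subset_Icc ⟨le_rfl, ht0.trans htT⟩ ⟨ht0, htT⟩ hτ))

/-- Characteristic representation of the balance law: if `X` is the flow
of the (bounded Carathéodory) vector field `f` (encoded in integral form) and
`Y_t(x) = exp(∫₀ᵗ g_τ(X_τ(x)) dτ)`, then the measures `μ_t` defined by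
`⟨μ_t, φ⟩ = ∫ Y_t(x) φ(X_t(x)) dϑ(x)` form a distributional solution of the balance law
`∂_t μ + ∇·(f μ) = g μ`, `μ_0 = ϑ`: for every `C¹` function `φ` with bounded gradient,
`t ↦ ⟨μ_t, φ⟩` is absolutely continuous with a.e. derivative
`∫ Y_t [∇φ(X_t)·f_t(X_t) + g_t(X_t) φ(X_t)] dϑ` (encoded in integral/FTC form). -/
theorem stmt2 (n : ℕ) (T : ℝ) (hT : 0 < T)
    (ϑ : Measure (EuclideanSpace ℝ (Fin n))) [IsFiniteMeasure ϑ]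
    (hϑ_supp : ∃ K, IsCompact K ∧ ϑ Kᶜ = 0)
    (f : ℝ → EuclideanSpace ℝ (Fin n) → EuclideanSpace ℝ (Fin n))
    (g : ℝ → EuclideanSpace ℝ (Fin n) → ℝ)
    (hf_meas : ∀ x, Measurable fun t => f t x) (hg_meas : ∀ x, Measurable fun t => g t x)
    (hf_cont : ∀ t, Continuous (f t)) (hg_cont : ∀ t, Continuous (g t))
    (hf_bdd : ∃ C, ∀ t x, ‖f t x‖ ≤ C) (hg_bdd : ∃ C, ∀ t x, |g t x| ≤ C)
    (X : ℝ → EuclideanSpace ℝ (Fin n) → EuclideanSpace ℝ (Fin n))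
    (hX_cont : Continuous (Function.uncurry X))
    (hX0 : ∀ x, X 0 x = x)
    (hX_ode : ∀ x, ∀ t ∈ Icc 0 T, X t x = x + ∫ s in (0:ℝ)..t, f s (X s x))
    (Y : ℝ → EuclideanSpace ℝ (Fin n) → ℝ)
    (hY : ∀ t x, Y t x = Real.exp (∫ s in (0:ℝ)..t, g s (X s x))) :
    ∀ φ : EuclideanSpace ℝ (Fin n) → ℝ, ContDiff ℝ 1 φ →
      (∃ C, ∀ x, ‖fderiv ℝ φ x‖ ≤ C) →
      ∀ t ∈ Icc 0 T,
        (∫ x, Y t x * φ (X t x) ∂ϑ) - (∫ x, Y 0 x * φ (X 0 x) ∂ϑ) =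
          ∫ s in (0:ℝ)..t, ∫ x,
            Y s x * (fderiv ℝ φ (X s x) (f s (X s x)) + g s (X s x) * φ (X s x)) ∂ϑ :=
  stmt2_general n T ϑ hϑ_supp f g hf_meas hg_meas hf_cont hg_cont hf_bdd hg_bdd X hX_cont hX0 hX_ode
    Y hY
end

section
/- Let ϑ be a finite compactly supported nonnegative Borel measure on ℝ, let u : [0,1] → [−1, 1] be measurable, and set a(t) := ∫₀ᵗ u(s) ds. Define the measures μ_t := e^{−a(t)} · (x ↦ x + a(t))_♯ ϑ on ℝ. Then for every continuously differentiable φ : ℝ → ℝ with bounded derivative, the map t ↦ ∫ φ dμ_t is Lipschitz (in particular absolutely continuous) on [0,1], and for almost every t ∈ [0,1]: (d/dt) ∫ φ dμ_t = u(t) · ∫ φ' dμ_t − u(t) · ∫ φ dμ_t. In other words, μ is a distributional solution of the balance law ∂_t μ + u_t ∂_x μ = −u_t μ with μ₀ = ϑ. -/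
/-!
Writing `G(b) = ∫ φ(x + b) dϑ`, the pushforward formula gives `∫ φ dμ_t = F(a(t))` with
`F(b) = e^{-b} G(b)`. Since `φ'` is bounded and `ϑ` is finite, differentiation under the integral
sign makes `G`, hence `F`, a `C¹` function with `G'(b) = ∫ φ'(x + b) dϑ`; in particular `F` is
Lipschitz on `[-1, 1]`. As `|u| ≤ 1`, the primitive `a` is `1`-Lipschitz from `[0, 1]` into
`[-1, 1]`, so `F ∘ a` is Lipschitz, and by the Lebesgue differentiation theorem `a' = u` almost
everywhere; the chain rule then gives the balance law.
-/

open MeasureTheory Set Filter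
open scoped NNReal

theorem Continuous.integrable_of_measure_compl_eq_zero {X E : Type*} [TopologicalSpace X]
    [T2Space X] [MeasurableSpace X] [OpensMeasurableSpace X] [NormedAddCommGroup E]
    {μ : Measure X} [IsFiniteMeasureOnCompacts μ] {K : Set X} (hK : IsCompact K)
    (hμK : μ Kᶜ = 0) {f : X → E} (hf : Continuous f) : Integrable f μ := by
  rw [← Measure.restrict_eq_self_of_ae_mem (ae_iff.2 hμK)]
  exact hf.continuousOn.integrableOn_compact hK

section Primitive

variable {E : Type*} [NormedAddCommGroup E] [NormedSpace ℝ E] {u : ℝ → E} {α β : ℝ}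

theorem lipschitzOnWith_primitive_of_norm_le {c : ℝ} {C : ℝ≥0} (hu : IntegrableOn u (Icc α β))
    (hc : c ∈ Icc α β) (hC : ∀ x ∈ Icc α β, ‖u x‖ ≤ C) :
    LipschitzOnWith C (fun t => ∫ s in c..t, u s) (Icc α β) := by
  have hint : ∀ s ∈ Icc α β, ∀ t ∈ Icc α β, IntervalIntegrable u volume s t :=
    fun s hs t ht => (hu.mono_set (uIcc_subset_Icc hs ht)).intervalIntegrable
  refine LipschitzOnWith.of_dist_le_mul fun s hs t ht => ?_
  rw [dist_eq_norm, intervalIntegral.integral_interval_sub_left (hint c hc s hs) (hint c hc t ht),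
    Real.dist_eq]
  exact intervalIntegral.norm_integral_le_of_norm_le_const fun x hx =>
    hC x (uIcc_subset_Icc ht hs (uIoc_subset_uIcc hx))

theorem norm_primitive_le_of_norm_le {C t : ℝ} (ht : t ∈ Icc α β)
    (hC : ∀ x ∈ Icc α β, ‖u x‖ ≤ C) : ‖∫ s in α..t, u s‖ ≤ C * (β - α) := by
  have hα : α ∈ Icc α β := ⟨le_rfl, ht.1.trans ht.2⟩
  refine (intervalIntegral.norm_integral_le_of_norm_le_const fun x hx =>
    hC x (uIcc_subset_Icc hα ht (uIoc_subset_uIcc hx))).trans ?_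
  have hC0 : 0 ≤ C := (norm_nonneg _).trans (hC α hα)
  rw [abs_of_nonneg (sub_nonneg.2 ht.1)]
  gcongr
  exact ht.2

theorem ae_hasDerivAt_primitive [CompleteSpace E] (hαβ : α ≤ β) (hu : IntegrableOn u (Icc α β)) :
    ∀ᵐ t ∂volume.restrict (Icc α β), HasDerivAt (fun t => ∫ s in α..t, u s) (u t) t := by
  have hα : α ∈ uIcc α β := left_mem_uIcc
  rw [ae_restrict_iff' measurableSet_Icc]
  have hu' : IntervalIntegrable u volume α β :=
    (intervalIntegrable_iff_integrableOn_Icc_of_le hαβ).2 hu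
  filter_upwards [hu'.ae_hasDerivAt_integral] with t ht htαβ
  rw [uIcc_of_le hαβ] at ht hα
  exact ht htαβ α hα

end Primitive

section ShiftedIntegral

variable {ϑ : Measure ℝ} [IsFiniteMeasure ϑ] {φ : ℝ → ℝ} {C : ℝ}

theorem hasDerivAt_integral_comp_add_right (hφ : Differentiable ℝ φ)
    (hC : ∀ x, |deriv φ x| ≤ C) {b : ℝ} (hint : Integrable (fun x => φ (x + b)) ϑ) :
    HasDerivAt (fun b => ∫ x, φ (x + b) ∂ϑ) (∫ x, deriv φ (x + b) ∂ϑ) b :=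
  (hasDerivAt_integral_of_dominated_loc_of_deriv_le (F := fun b x => φ (x + b))
    (F' := fun b x => deriv φ (x + b)) (bound := fun _ => C) univ_mem
    (Eventually.of_forall fun _ =>
      (hφ.continuous.comp (continuous_add_const _)).aestronglyMeasurable)
    hint ((measurable_deriv φ).comp (measurable_add_const b)).aestronglyMeasurable
    (ae_of_all _ fun _ _ _ => hC _) (integrable_const C)
    (ae_of_all _ fun x c _ => (hφ (x + c)).hasDerivAt.comp_const_add x c)).2

theorem continuous_integral_comp_add_right {ψ : ℝ → ℝ} (hψ : Continuous ψ)
    (hC : ∀ x, |ψ x| ≤ C) : Continuous fun b => ∫ x, ψ (x + b) ∂ϑ :=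
  continuous_of_dominated (bound := fun _ => C)
    (fun _ => (hψ.comp (continuous_add_const _)).aestronglyMeasurable)
    (fun _ => ae_of_all _ fun _ => hC _) (integrable_const C)
    (ae_of_all _ fun _ => by fun_prop)

theorem contDiff_integral_comp_add_right (hφ : ContDiff ℝ 1 φ) (hC : ∀ x, |deriv φ x| ≤ C)
    (hint : ∀ b, Integrable (fun x => φ (x + b)) ϑ) :
    ContDiff ℝ 1 fun b => ∫ x, φ (x + b) ∂ϑ := by
  have hderiv b := hasDerivAt_integral_comp_add_right (hφ.differentiable one_ne_zero) hC (hint b)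
  refine contDiff_one_iff_deriv.2 ⟨fun b => (hderiv b).differentiableAt, ?_⟩
  rw [funext fun b => (hderiv b).deriv]
  exact continuous_integral_comp_add_right (hφ.continuous_deriv le_rfl) hC

theorem hasDerivAt_exp_neg_mul_integral_comp_add_right (hφ : Differentiable ℝ φ)
    (hC : ∀ x, |deriv φ x| ≤ C) {b : ℝ} (hint : Integrable (fun x => φ (x + b)) ϑ) :
    HasDerivAt (fun b => Real.exp (-b) * ∫ x, φ (x + b) ∂ϑ)
      (Real.exp (-b) * (∫ x, deriv φ (x + b) ∂ϑ) - Real.exp (-b) * ∫ x, φ (x + b) ∂ϑ) b :=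
  ((hasDerivAt_neg b).exp.mul (hasDerivAt_integral_comp_add_right hφ hC hint)).congr_deriv
    (by ring)

theorem contDiff_exp_neg_mul_integral_comp_add_right (hφ : ContDiff ℝ 1 φ)
    (hC : ∀ x, |deriv φ x| ≤ C) (hint : ∀ b, Integrable (fun x => φ (x + b)) ϑ) :
    ContDiff ℝ 1 fun b => Real.exp (-b) * ∫ x, φ (x + b) ∂ϑ :=
  (Real.contDiff_exp.comp contDiff_neg).mul (contDiff_integral_comp_add_right hφ hC hint)

end ShiftedIntegral

theorem integral_ofReal_smul_map_add (ϑ : Measure ℝ) (ψ : ℝ → ℝ) {c : ℝ} (hc : 0 ≤ c) (b : ℝ) :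
    ∫ x, ψ x ∂(ENNReal.ofReal c • ϑ.map (fun x => x + b)) = c * ∫ x, ψ (x + b) ∂ϑ := by
  rw [integral_smul_measure, ENNReal.toReal_ofReal hc, smul_eq_mul]
  exact congrArg _ (integral_map_equiv (MeasurableEquiv.addRight b) ψ)

/-- The explicit family `μ_t = e^{−a(t)} (x ↦ x + a(t))_♯ ϑ`, with
`a(t) = ∫₀ᵗ u(s) ds` and `|u| ≤ 1`, is a distributional solution of the balance law
`∂_t μ + u_t ∂_x μ = −u_t μ`, `μ_0 = ϑ`: for every `C¹` test function `φ` with bounded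
derivative, `t ↦ ∫ φ dμ_t` is Lipschitz on `[0,1]` and for a.e. `t ∈ [0,1]` its
derivative equals `u(t) ∫ φ' dμ_t − u(t) ∫ φ dμ_t`. -/
theorem stmt9 (ϑ : Measure ℝ) [IsFiniteMeasure ϑ]
    (hϑ_supp : ∃ K, IsCompact K ∧ ϑ Kᶜ = 0)
    (u : ℝ → ℝ) (hu_meas : Measurable u)
    (hu_bdd : ∀ t ∈ Icc (0:ℝ) 1, u t ∈ Icc (-1:ℝ) 1)
    (a : ℝ → ℝ) (ha : ∀ t, a t = ∫ s in (0:ℝ)..t, u s)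
    (μ : ℝ → Measure ℝ)
    (hμ : ∀ t, μ t = ENNReal.ofReal (Real.exp (-a t)) • ϑ.map (fun x => x + a t)) :
    ∀ φ : ℝ → ℝ, ContDiff ℝ 1 φ → (∃ C, ∀ x, |deriv φ x| ≤ C) →
      (∃ C : NNReal, LipschitzOnWith C (fun t => ∫ x, φ x ∂μ t) (Icc (0:ℝ) 1)) ∧
      ∀ᵐ t ∂(volume.restrict (Icc (0:ℝ) 1)),
        HasDerivAt (fun t => ∫ x, φ x ∂μ t)
          (u t * (∫ x, deriv φ x ∂μ t) - u t * ∫ x, φ x ∂μ t) t := by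
  obtain ⟨K, hK, hϑK⟩ := hϑ_supp
  rintro φ hφ ⟨C, hC⟩
  have hint b : Integrable (fun x => φ (x + b)) ϑ :=
    (hφ.continuous.comp (continuous_add_const b)).integrable_of_measure_compl_eq_zero hK hϑK
  have hrepr (ψ : ℝ → ℝ) t : ∫ x, ψ x ∂μ t = Real.exp (-a t) * ∫ x, ψ (x + a t) ∂ϑ := by
    rw [hμ, integral_ofReal_smul_map_add ϑ ψ (Real.exp_nonneg _)]
  have hu_norm : ∀ t ∈ Icc (0:ℝ) 1, ‖u t‖ ≤ (1 : ℝ≥0) := fun t ht => by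
    simpa using abs_le.2 (hu_bdd t ht)
  have hu_int : IntegrableOn u (Icc 0 1) :=
    Measure.integrableOn_of_bounded measure_Icc_lt_top.ne hu_meas.aestronglyMeasurable
      ((ae_restrict_iff' measurableSet_Icc).2 (ae_of_all _ hu_norm))
  have ha_eq : a = fun t => ∫ s in (0:ℝ)..t, u s := funext ha
  refine ⟨?_, ?_⟩
  · obtain ⟨L, hL⟩ := (contDiff_exp_neg_mul_integral_comp_add_right hφ hC hint).contDiffOn
      |>.exists_lipschitzOnWith one_ne_zero (convex_Icc (-1) 1) isCompact_Icc
    have ha_lip : LipschitzOnWith 1 a (Icc 0 1) :=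
      ha_eq ▸ lipschitzOnWith_primitive_of_norm_le hu_int ⟨le_rfl, zero_le_one⟩ hu_norm
    have ha_maps : MapsTo a (Icc 0 1) (Icc (-1) 1) := fun t ht =>
      abs_le.1 (by simpa [ha] using norm_primitive_le_of_norm_le ht hu_norm)
    exact ⟨L * 1, funext (hrepr φ) ▸ hL.comp ha_lip ha_maps⟩
  · filter_upwards [ae_hasDerivAt_primitive zero_le_one hu_int] with t ht
    rw [funext (hrepr φ), hrepr φ, hrepr (deriv φ)]
    exact (hasDerivAt_exp_neg_mul_integral_comp_add_right (hφ.differentiable one_ne_zero) hC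
      (hint (a t))).comp t (ha_eq ▸ ht) |>.congr_deriv (by ring)
end
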